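/- arXiv:1409.2121 — 4 statements merged into one kernel-verified Lean document; each statement's English description precedes it below -/
import Mathlib

section
/- Let F be a probability measure with support contained in [0, b̃], y > 0, σ > 0, z = u + iv with v > 2σ√(y·b̃), and suppose t lies in the strip D = {t ∈ ℂ : 0 ≤ Im(t) ≤ v/(2σ²)} and satisfies Im(z - tσ²) > 0. Then the map G(t) = y·∫ x/(x - z + tσ²) dF(x) - 1 maps D into D and is a contraction on D with Lipschitz constant strictly less than 1; consequently the equation t = G(t) has a unique solution in D. -/
/-!
Put `w = z - tσ²`, so that `G t = y ∫ x/(x - w) dF - 1`; on the strip `D` we have `Im w ≥ v/2`.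
For `x ≥ 0`, `Im (x/(x - w)) = x Im w / |x - w|²` lies in `[0, x / Im w]`, so `Im G t` lies in
`[0, 2y b̃/v] ⊆ [0, v/(2σ²)]`. Since `|x - w| ≥ Im w`, the identity
`x/(x - w) - x/(x - w') = x (w - w') / ((x - w)(x - w'))` makes `G` Lipschitz on `D` with constant
`4yσ²b̃/v² < 1`. The strip is closed, so Banach's fixed point theorem applies.
-/

open MeasureTheory Set

theorem existsUnique_fixedPt_of_dist_le_mul {α : Type*} [MetricSpace α] [CompleteSpace α]
    {s : Set α} (hs : IsClosed s) (hne : s.Nonempty) {f : α → α} (hf : MapsTo f s s)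
    {L : ℝ} (hL : L < 1) (hlip : ∀ x ∈ s, ∀ x' ∈ s, dist (f x) (f x') ≤ L * dist x x') :
    ∃! x, x ∈ s ∧ f x = x := by
  have : CompleteSpace s := hs.completeSpace_coe
  have : Nonempty s := hne.to_subtype
  have hc : ContractingWith L.toNNReal (hf.restrict f s s) :=
    ⟨by simpa using hL, LipschitzWith.of_dist_le_mul fun a b => by
      simpa [Subtype.dist_eq] using (hlip a a.2 b b.2).trans
        (mul_le_mul_of_nonneg_right (le_max_left L 0) dist_nonneg)⟩
  have hfix (p : s) : f p = p ↔ Function.IsFixedPt (hf.restrict f s s) p := by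
    simp [Function.IsFixedPt, Subtype.ext_iff]
  obtain ⟨p, hp⟩ : ∃ p : s, Function.IsFixedPt (hf.restrict f s s) p :=
    ⟨_, hc.fixedPoint_isFixedPt⟩
  refine ⟨p, ⟨p.2, (hfix p).2 hp⟩, ?_⟩
  rintro x ⟨hx, hfx⟩
  exact congrArg Subtype.val (hc.fixedPoint_unique' ((hfix ⟨x, hx⟩).1 hfx) hp)

section Pointwise

variable {x : ℝ} {w w' : ℂ}

theorem im_le_norm_ofReal_sub (x : ℝ) (w : ℂ) : w.im ≤ ‖(x : ℂ) - w‖ := by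
  simpa [norm_sub_rev] using Complex.im_le_norm (w - x)

theorem ofReal_sub_ne_zero (x : ℝ) (hw : 0 < w.im) : (x : ℂ) - w ≠ 0 := fun h => by
  simpa [h] using hw.trans_le (im_le_norm_ofReal_sub x w)

theorem im_ofReal_div_ofReal_sub (x : ℝ) (w : ℂ) :
    ((x : ℂ) / (x - w)).im = x * w.im / Complex.normSq (x - w) := by
  simp [Complex.div_im, neg_div]

theorem im_ofReal_div_ofReal_sub_le (hx : 0 ≤ x) (hw : 0 < w.im) :
    ((x : ℂ) / (x - w)).im ≤ x / w.im := by
  rw [im_ofReal_div_ofReal_sub, ← Complex.norm_mul_self_eq_normSq]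
  have := im_le_norm_ofReal_sub x w
  calc x * w.im / (‖(x : ℂ) - w‖ * ‖(x : ℂ) - w‖) ≤ x * w.im / (w.im * w.im) := by gcongr
    _ = x / w.im := by field_simp

theorem norm_ofReal_div_ofReal_sub_le (hx : 0 ≤ x) (hw : 0 < w.im) :
    ‖(x : ℂ) / (x - w)‖ ≤ x / w.im := by
  rw [norm_div, Complex.norm_real, Real.norm_of_nonneg hx]
  gcongr
  exact im_le_norm_ofReal_sub x w

theorem norm_ofReal_div_ofReal_sub_sub_le (hx : 0 ≤ x) {c : ℝ} (hc : 0 < c) (hw : c ≤ w.im)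
    (hw' : c ≤ w'.im) : ‖(x : ℂ) / (x - w) - x / (x - w')‖ ≤ x / c ^ 2 * ‖w - w'‖ := by
  have hne := ofReal_sub_ne_zero x (hc.trans_le hw)
  have hne' := ofReal_sub_ne_zero x (hc.trans_le hw')
  have hdiff : (x : ℂ) / (x - w) - x / (x - w') = x * (w - w') / ((x - w) * (x - w')) := by
    field_simp
    ring
  rw [hdiff, norm_div, norm_mul, norm_mul, Complex.norm_real, Real.norm_of_nonneg hx, sq]
  have h := hw.trans (im_le_norm_ofReal_sub x w)
  have h' := hw'.trans (im_le_norm_ofReal_sub x w')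
  calc x * ‖w - w'‖ / (‖(x : ℂ) - w‖ * ‖(x : ℂ) - w'‖) ≤ x * ‖w - w'‖ / (c * c) := by gcongr
    _ = x / (c * c) * ‖w - w'‖ := by ring

end Pointwise

section Integral

variable {μ : Measure ℝ} {b c y : ℝ} {w w' : ℂ} (hμ : ∀ᵐ x ∂μ, x ∈ Icc 0 b)
include hμ

theorem integrable_ofReal_div_ofReal_sub [IsFiniteMeasure μ] (hw : 0 < w.im) :
    Integrable (fun x : ℝ => (x : ℂ) / (x - w)) μ := by
  refine Integrable.mono' (integrable_const (b / w.im)) ?_ ?_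
  · exact (Complex.continuous_ofReal.div (by fun_prop)
      (ofReal_sub_ne_zero · hw)).aestronglyMeasurable
  · filter_upwards [hμ] with x hx
    exact (norm_ofReal_div_ofReal_sub_le hx.1 hw).trans (by gcongr; exact hx.2)

theorem im_integral_ofReal_div_ofReal_sub_mem_Icc [IsFiniteMeasure μ] (hw : 0 < w.im) :
    (∫ x, (x : ℂ) / (x - w) ∂μ).im ∈ Icc 0 (b / w.im * μ.real univ) := by
  have hint := integrable_ofReal_div_ofReal_sub hμ hw
  have him : (∫ x, (x : ℂ) / (x - w) ∂μ).im = ∫ x, ((x : ℂ) / (x - w)).im ∂μ :=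
    (integral_im hint).symm
  rw [him]
  constructor
  · refine integral_nonneg_of_ae ?_
    filter_upwards [hμ] with x hx
    rw [im_ofReal_div_ofReal_sub]
    exact div_nonneg (mul_nonneg hx.1 hw.le) (Complex.normSq_nonneg _)
  · refine (integral_mono_ae hint.im (integrable_const (b / w.im)) ?_).trans_eq
      (by simp [mul_comm])
    filter_upwards [hμ] with x hx
    exact (im_ofReal_div_ofReal_sub_le hx.1 hw).trans (by gcongr; exact hx.2)

theorem norm_integral_ofReal_div_ofReal_sub_sub_le [IsFiniteMeasure μ] (hc : 0 < c)
    (hw : c ≤ w.im) (hw' : c ≤ w'.im) :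
    ‖∫ x, (x : ℂ) / (x - w) ∂μ - ∫ x, (x : ℂ) / (x - w') ∂μ‖
      ≤ b / c ^ 2 * ‖w - w'‖ * μ.real univ := by
  rw [← integral_sub (integrable_ofReal_div_ofReal_sub hμ (hc.trans_le hw))
    (integrable_ofReal_div_ofReal_sub hμ (hc.trans_le hw'))]
  refine norm_integral_le_of_norm_le_const ?_
  filter_upwards [hμ] with x hx
  exact (norm_ofReal_div_ofReal_sub_sub_le hx.1 hc hw hw').trans (by gcongr; exact hx.2)

variable [IsProbabilityMeasure μ]

theorem im_mul_integral_ofReal_div_ofReal_sub_sub_one_mem_Icc (hy : 0 ≤ y) (hw : 0 < w.im) :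
    ((y : ℂ) * (∫ x, (x : ℂ) / (x - w) ∂μ) - 1).im ∈ Icc 0 (y * (b / w.im)) := by
  obtain ⟨h0, h1⟩ := im_integral_ofReal_div_ofReal_sub_mem_Icc hμ hw
  rw [probReal_univ, mul_one] at h1
  simp only [Complex.sub_im, Complex.im_ofReal_mul, Complex.one_im, sub_zero]
  exact ⟨mul_nonneg hy h0, mul_le_mul_of_nonneg_left h1 hy⟩

theorem dist_mul_integral_ofReal_div_ofReal_sub_sub_one_le (hy : 0 ≤ y) (hc : 0 < c)
    (hw : c ≤ w.im) (hw' : c ≤ w'.im) :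
    dist ((y : ℂ) * (∫ x, (x : ℂ) / (x - w) ∂μ) - 1) ((y : ℂ) * (∫ x, (x : ℂ) / (x - w') ∂μ) - 1)
      ≤ y * (b / c ^ 2) * ‖w - w'‖ := by
  rw [dist_eq_norm, sub_sub_sub_cancel_right, ← mul_sub, norm_mul, Complex.norm_real,
    Real.norm_of_nonneg hy, mul_assoc]
  gcongr
  simpa using norm_integral_ofReal_div_ofReal_sub_sub_le hμ hc hw hw'

end Integral

theorem half_im_le_im_sub_mul_sq {σ : ℝ} (hσ : 0 < σ) {z t : ℂ}
    (ht : t.im ≤ z.im / (2 * σ ^ 2)) : z.im / 2 ≤ (z - t * (σ : ℂ) ^ 2).im := by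
  have := (le_div_iff₀ (by positivity)).1 ht
  simp only [Complex.sub_im, ← Complex.ofReal_pow, Complex.mul_im, Complex.ofReal_re,
    Complex.ofReal_im, mul_zero]
  linarith

theorem norm_sub_mul_sq_sub_sub_mul_sq (z t t' : ℂ) {σ : ℝ} :
    ‖(z - t * (σ : ℂ) ^ 2) - (z - t' * (σ : ℂ) ^ 2)‖ = σ ^ 2 * dist t t' := by
  rw [dist_eq_norm, sub_sub_sub_cancel_left, ← sub_mul, norm_mul, norm_sub_rev, norm_pow,
    Complex.norm_real, Real.norm_eq_abs, sq_abs, mul_comm]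

theorem four_mul_sq_mul_lt_sq {σ a v : ℝ} (hσ : 0 ≤ σ) (ha : 0 ≤ a) (h : 2 * σ * √a < v) :
    4 * σ ^ 2 * a < v ^ 2 :=
  calc 4 * σ ^ 2 * a = (2 * σ * √a) ^ 2 := by rw [mul_pow, mul_pow, Real.sq_sqrt ha]; norm_num
    _ < v ^ 2 := pow_lt_pow_left₀ h (by positivity) two_ne_zero

/-- Let `F` be a probability measure on `[0, b̃]`, `y, σ, b̃ > 0`,
`z = u + iv` with `v > 2σ√(y b̃)`, and `D = {t : 0 ≤ Im t ≤ v/(2σ²)}`. Then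
`G(t) = y ∫ x/(x - z + tσ²) dF(x) - 1` maps `D` into `D`, is a contraction on `D`
with some Lipschitz constant `L < 1`, and hence has a unique fixed point in `D`. -/
theorem contraction_unique_fixed_point
    (F : Measure ℝ) [IsProbabilityMeasure F] (btil : ℝ) (hb : 0 < btil)
    (hsupp : F ((Set.Icc (0 : ℝ) btil)ᶜ) = 0)
    (y σ : ℝ) (hy : 0 < y) (hσ : 0 < σ)
    (z : ℂ) (hv : 2 * σ * Real.sqrt (y * btil) < z.im)
    (D : Set ℂ) (hD : D = {t : ℂ | 0 ≤ t.im ∧ t.im ≤ z.im / (2 * σ ^ 2)})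
    (G : ℂ → ℂ)
    (hG : ∀ t : ℂ, G t = (y : ℂ) * (∫ x, (x : ℂ) / ((x : ℂ) - z + t * (σ : ℂ) ^ 2) ∂F) - 1) :
    (∀ t ∈ D, G t ∈ D) ∧
    (∃ L : ℝ, 0 ≤ L ∧ L < 1 ∧ ∀ t ∈ D, ∀ t' ∈ D, dist (G t) (G t') ≤ L * dist t t') ∧
    (∃! t : ℂ, t ∈ D ∧ G t = t) := by
  set v := z.im
  have hv0 : 0 < v := (by positivity : 0 ≤ 2 * σ * √(y * btil)).trans_lt hv
  have hv2 := four_mul_sq_mul_lt_sq hσ.le (by positivity) hv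
  have hμ : ∀ᵐ x ∂F, x ∈ Icc 0 btil := ae_iff.2 hsupp
  set w : ℂ → ℂ := fun t => z - t * (σ : ℂ) ^ 2
  have hGw (t : ℂ) : G t = y * ∫ x, (x : ℂ) / (x - w t) ∂F - 1 := by simp_rw [hG, w, sub_add]
  have hw (t : ℂ) (ht : t ∈ D) : v / 2 ≤ (w t).im :=
    half_im_le_im_sub_mul_sq hσ (by rw [hD] at ht; exact ht.2)
  have hmaps : MapsTo G D D := by
    intro t ht
    obtain ⟨h0, h1⟩ := im_mul_integral_ofReal_div_ofReal_sub_sub_one_mem_Icc hμ hy.le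
      (show 0 < (w t).im by linarith [hw t ht])
    rw [hD, hGw]
    refine ⟨h0, h1.trans ?_⟩
    calc y * (btil / (w t).im) ≤ y * (btil / (v / 2)) := by gcongr; exact hw t ht
      _ ≤ v / (2 * σ ^ 2) := by
        rw [div_div_eq_mul_div, mul_div_assoc', div_le_div_iff₀ hv0 (by positivity)]
        nlinarith
  set L := 4 * y * σ ^ 2 * btil / v ^ 2 with hL_def
  have hL : L < 1 := by rw [div_lt_one (by positivity)]; linarith
  have hlip (t : ℂ) (ht : t ∈ D) (t' : ℂ) (ht' : t' ∈ D) : dist (G t) (G t') ≤ L * dist t t' := by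
    rw [hGw, hGw]
    refine (dist_mul_integral_ofReal_div_ofReal_sub_sub_one_le hμ hy.le (by positivity)
      (hw t ht) (hw t' ht')).trans_eq ?_
    rw [norm_sub_mul_sq_sub_sub_mul_sq, hL_def]
    field_simp
    ring
  have hclosed : IsClosed D := by
    rw [hD]
    exact isClosed_Icc.preimage Complex.continuous_im
  refine ⟨hmaps, ⟨L, by positivity, hL, hlip⟩, ?_⟩
  exact existsUnique_fixedPt_of_dist_le_mul hclosed ⟨0, by simp [hD]; positivity⟩ hmaps hL hlip
end

section
/- Let F be a probability measure supported on [a,b], 0 < a ≤ b < ∞, with Stieltjes transform m, let y > 0, σ > 0, and z = u + iv with v ≥ 2σ√(yb). If t = t₁ + it₂ solves t = y - 1 + y(z - tσ²)m(z - tσ²) with 0 < t₂ < v/σ², then either t₂ ≥ (v + √(v² - 4σ²yb))/(2σ²) or t₂ ≤ (v - √(v² - 4σ²yb))/(2σ²). -/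
/-!
Write `w = z - tσ²`; the constraint `t₂ < v/σ²` says `Im w = v - t₂σ² > 0`. Taking imaginary
parts in the fixed-point equation gives `t₂ = y Im(w m(w)) = y ∫ x Im w / |x - w|² dF(x)`, and
`|x - w| ≥ Im w`, `0 ≤ x ≤ b` bound this by `y b / Im w`. Hence `t₂ (v - σ² t₂) ≤ y b`, so `t₂`
lies outside the open interval between the roots of `σ² s² - v s + y b`.
-/

open MeasureTheory Set

noncomputable def stieltjesTransform (F : Measure ℝ) (w : ℂ) : ℂ := ∫ x, ((x : ℂ) - w)⁻¹ ∂F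

/-- For `q ^ 2 < 4 * p * r` the square root is `0` and the dichotomy is trivial. -/
theorem le_or_le_of_mul_sub_le {p q r s : ℝ} (hp : 0 < p) (h : s * (q - p * s) ≤ r) :
    (q + √(q ^ 2 - 4 * p * r)) / (2 * p) ≤ s ∨ s ≤ (q - √(q ^ 2 - 4 * p * r)) / (2 * p) := by
  by_contra! hs
  obtain ⟨hlt, hgt⟩ := hs
  rw [lt_div_iff₀ (by positivity)] at hlt
  rw [div_lt_iff₀ (by positivity)] at hgt
  have habs : |2 * p * s - q| < √(q ^ 2 - 4 * p * r) :=
    abs_sub_lt_iff.2 ⟨by linarith, by linarith⟩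
  have hsq := (Real.lt_sqrt (abs_nonneg _)).1 habs
  rw [sq_abs] at hsq
  nlinarith [mul_le_mul_of_nonneg_left h (by positivity : (0 : ℝ) ≤ 4 * p)]

theorem im_mul_inv_ofReal_sub (x : ℝ) (w : ℂ) :
    (w * ((x : ℂ) - w)⁻¹).im = x * w.im / Complex.normSq ((x : ℂ) - w) := by
  simp only [Complex.mul_im, Complex.inv_re, Complex.inv_im, Complex.sub_re, Complex.sub_im,
    Complex.ofReal_re, Complex.ofReal_im]
  ring

theorem im_mul_inv_ofReal_sub_le {x : ℝ} {w : ℂ} (hx : 0 ≤ x) (hw : 0 < w.im) :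
    (w * ((x : ℂ) - w)⁻¹).im ≤ x / w.im := by
  have hnormSq : w.im ^ 2 ≤ Complex.normSq ((x : ℂ) - w) := by
    rw [Complex.normSq_apply]
    simp only [Complex.sub_im, Complex.ofReal_im]
    nlinarith [mul_self_nonneg ((x : ℂ) - w).re]
  rw [im_mul_inv_ofReal_sub, div_le_div_iff₀ (by nlinarith) hw]
  nlinarith [mul_le_mul_of_nonneg_left hnormSq (mul_nonneg hx hw.le)]

theorem integrable_inv_ofReal_sub (F : Measure ℝ) [IsFiniteMeasure F] {w : ℂ} (hw : 0 < w.im) :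
    Integrable (fun x : ℝ => ((x : ℂ) - w)⁻¹) F := by
  refine .of_bound (Complex.measurable_ofReal.sub_const w).inv.aestronglyMeasurable
    (w.im)⁻¹ (ae_of_all _ fun x => ?_)
  rw [norm_inv]
  gcongr
  simpa [abs_of_pos hw] using Complex.abs_im_le_norm ((x : ℂ) - w)

theorem im_mul_stieltjesTransform_le {F : Measure ℝ} [IsProbabilityMeasure F] {b : ℝ}
    (hF : ∀ᵐ x ∂F, x ∈ Icc 0 b) {w : ℂ} (hw : 0 < w.im) :
    (w * stieltjesTransform F w).im ≤ b / w.im := by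
  have hint := (integrable_inv_ofReal_sub F hw).const_mul w
  rw [stieltjesTransform, ← integral_const_mul]
  calc (∫ x, w * ((x : ℂ) - w)⁻¹ ∂F).im = ∫ x, (w * ((x : ℂ) - w)⁻¹).im ∂F :=
        (integral_im hint).symm
    _ ≤ ∫ _, b / w.im ∂F := by
        refine integral_mono_ae hint.im (integrable_const _) (hF.mono fun x hx => ?_)
        exact (im_mul_inv_ofReal_sub_le hx.1 hw).trans (div_le_div_of_nonneg_right hx.2 hw.le)
    _ = b / w.im := by simp

theorem im_mul_sub_le_of_fixed_point {F : Measure ℝ} [IsProbabilityMeasure F] {b y σ : ℝ}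
    {z t : ℂ} (hF : ∀ᵐ x ∂F, x ∈ Icc 0 b) (hy : 0 ≤ y) (hw : t.im * σ ^ 2 < z.im)
    (ht : t = y - 1 + y * (z - t * σ ^ 2) * stieltjesTransform F (z - t * σ ^ 2)) :
    t.im * (z.im - σ ^ 2 * t.im) ≤ y * b := by
  set w := z - t * (σ : ℂ) ^ 2
  have hwim : w.im = z.im - σ ^ 2 * t.im := by
    simp only [w, ← Complex.ofReal_pow, Complex.sub_im, Complex.mul_im, Complex.ofReal_im,
      Complex.ofReal_re, mul_zero, zero_add]
    ring
  have htim : t.im = y * (w * stieltjesTransform F w).im := by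
    conv_lhs => rw [ht]
    simp [mul_assoc]
  have hwpos : 0 < w.im := by rw [hwim]; linarith
  have hbound : t.im ≤ y * (b / w.im) := by
    rw [htim]
    exact mul_le_mul_of_nonneg_left (im_mul_stieltjesTransform_le hF hwpos) hy
  rw [mul_div_assoc', le_div_iff₀ hwpos, hwim] at hbound
  exact hbound

theorem im_t_dichotomy_general
    (F : Measure ℝ) [IsProbabilityMeasure F] (a b : ℝ) (ha : 0 < a)
    (hsupp : F ((Set.Icc a b)ᶜ) = 0)
    (y σ : ℝ) (hy : 0 < y) (hσ : 0 < σ)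
    (m : ℂ → ℂ) (hm : ∀ w : ℂ, m w = ∫ x, ((x : ℂ) - w)⁻¹ ∂F)
    (z t : ℂ)
    (ht2lt : t.im < z.im / σ ^ 2)
    (ht : t = (y : ℂ) - 1 + (y : ℂ) * (z - t * (σ : ℂ) ^ 2) * m (z - t * (σ : ℂ) ^ 2)) :
    (z.im + Real.sqrt (z.im ^ 2 - 4 * σ ^ 2 * y * b)) / (2 * σ ^ 2) ≤ t.im ∨
    t.im ≤ (z.im - Real.sqrt (z.im ^ 2 - 4 * σ ^ 2 * y * b)) / (2 * σ ^ 2) := by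
  have hσ2 : 0 < σ ^ 2 := by positivity
  have hF : ∀ᵐ x ∂F, x ∈ Icc 0 b :=
    (ae_iff.2 hsupp).mono fun x hx => ⟨ha.le.trans hx.1, hx.2⟩
  have hm' : m = stieltjesTransform F := funext hm
  subst hm'
  have key := im_mul_sub_le_of_fixed_point hF hy.le ((lt_div_iff₀ hσ2).1 ht2lt) ht
  simpa only [mul_assoc] using le_or_le_of_mul_sub_le hσ2 key

/-- Let `F` be a probability measure supported on `[a,b]`, `0 < a ≤ b`,
with Stieltjes transform `m`, `y, σ > 0`, `z = u + iv`, `v ≥ 2σ√(yb)`. If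
`t = t₁ + it₂` solves `t = y - 1 + y(z - tσ²)m(z - tσ²)` with `0 < t₂ < v/σ²`, then
either `t₂ ≥ (v + √(v² - 4σ²yb))/(2σ²)` or `t₂ ≤ (v - √(v² - 4σ²yb))/(2σ²)`. -/
theorem im_t_dichotomy
    (F : Measure ℝ) [IsProbabilityMeasure F] (a b : ℝ) (ha : 0 < a) (hab : a ≤ b)
    (hsupp : F ((Set.Icc a b)ᶜ) = 0)
    (y σ : ℝ) (hy : 0 < y) (hσ : 0 < σ)
    (m : ℂ → ℂ) (hm : ∀ w : ℂ, m w = ∫ x, ((x : ℂ) - w)⁻¹ ∂F)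
    (z t : ℂ) (hv : 2 * σ * Real.sqrt (y * b) ≤ z.im)
    (ht2pos : 0 < t.im) (ht2lt : t.im < z.im / σ ^ 2)
    (ht : t = (y : ℂ) - 1 + (y : ℂ) * (z - t * (σ : ℂ) ^ 2) * m (z - t * (σ : ℂ) ^ 2)) :
    (z.im + Real.sqrt (z.im ^ 2 - 4 * σ ^ 2 * y * b)) / (2 * σ ^ 2) ≤ t.im ∨
    t.im ≤ (z.im - Real.sqrt (z.im ^ 2 - 4 * σ ^ 2 * y * b)) / (2 * σ ^ 2) :=
  im_t_dichotomy_general F a b ha hsupp y σ hy hσ m hm z t ht2lt ht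
end

section
/- Let F be a probability measure supported in [a,b] with 0 < a, possibly with a point mass at 0, y > 0, σ ≥ 0. Suppose m₁ and m₂ both lie in the set D = {ξ ∈ ℂ : α(1 - yσ²ξ)² - σ²(y-1)(1 - yσ²ξ) ∈ ℂ⁺} for a given α ∈ ℂ⁺, and both satisfy m_j = ∫ dF(τ) / ( τ/(1 - yσ²m_j) - α(1 - yσ²m_j) + σ²(y-1) ), assuming that the Stieltjes transform m of F satisfies the self-consistent equation m(γ) = ∫ dF^A(x) / ( x/(1+yσ²m(γ)) - γ(1+yσ²m(γ)) - σ²(y-1) ) for some probability measure F^A and all γ ∈ ℂ⁺. Then m₁ = m₂. -/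
open MeasureTheory

/-- Auxiliary lemma: any solution of the inverted DS equation in the admissible
domain equals `∫ (x - α)⁻¹ ∂FA`. -/
lemma key_inverted_DS
    (F FA : Measure ℝ)
    (y σ : ℝ)
    (m : ℂ → ℂ) (hm : ∀ γ : ℂ, m γ = ∫ τ, ((τ : ℂ) - γ)⁻¹ ∂F)
    (hDS : ∀ γ : ℂ, 0 < γ.im →
      m γ = ∫ x, ((x : ℂ) / (1 + (y : ℂ) * (σ : ℂ) ^ 2 * m γ)
        - γ * (1 + (y : ℂ) * (σ : ℂ) ^ 2 * m γ)
        - (σ : ℂ) ^ 2 * ((y : ℂ) - 1))⁻¹ ∂FA)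
    (α : ℂ) (m' : ℂ)
    (hD : 0 < (α * (1 - (y : ℂ) * (σ : ℂ) ^ 2 * m') ^ 2
      - (σ : ℂ) ^ 2 * ((y : ℂ) - 1) * (1 - (y : ℂ) * (σ : ℂ) ^ 2 * m')).im)
    (he : m' = ∫ τ, ((τ : ℂ) / (1 - (y : ℂ) * (σ : ℂ) ^ 2 * m')
      - α * (1 - (y : ℂ) * (σ : ℂ) ^ 2 * m') + (σ : ℂ) ^ 2 * ((y : ℂ) - 1))⁻¹ ∂F) :
    m' = ∫ x, ((x : ℂ) - α)⁻¹ ∂FA := by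
  set k : ℂ := (y : ℂ) * (σ : ℂ) ^ 2 with hk
  set s : ℂ := (σ : ℂ) ^ 2 * ((y : ℂ) - 1) with hs
  set c : ℂ := 1 - k * m' with hc
  have hc0 : c ≠ 0 := by
    intro h
    rw [h] at hD
    simp at hD
  set γ : ℂ := α * c ^ 2 - s * c with hγdef
  have hγ : 0 < γ.im := hD
  -- Step 1: m' = c * m γ
  have hint1 : ∀ τ : ℝ, ((τ : ℂ) / c - α * c + s)⁻¹ = c * ((τ : ℂ) - γ)⁻¹ := by
    intro τ
    have h : (τ : ℂ) / c - α * c + s = ((τ : ℂ) - γ) * c⁻¹ := by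
      field_simp [hγdef]
      ring
    rw [h, mul_inv, inv_inv, mul_comm]
  have hM : m' = c * m γ := by
    rw [he, hm γ]
    simp only [hint1]
    rw [MeasureTheory.integral_const_mul]
  -- Step 2: 1 + k * m γ = c⁻¹
  have h1 : c * (1 + k * m γ) = 1 := by
    have h2 : c * (k * m γ) = k * m' := by rw [hM]; ring
    calc c * (1 + k * m γ) = c + c * (k * m γ) := by ring
      _ = c + k * m' := by rw [h2]
      _ = 1 := by rw [hc]; ring
  have hcinv : 1 + k * m γ = c⁻¹ := (inv_eq_of_mul_eq_one_right h1).symm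
  -- Step 3: evaluate the DS equation at γ
  have hDSγ := hDS γ hγ
  rw [hcinv] at hDSγ
  have hint2 : ∀ x : ℝ, ((x : ℂ) / c⁻¹ - γ * c⁻¹ - s)⁻¹ = c⁻¹ * ((x : ℂ) - α)⁻¹ := by
    intro x
    have h : (x : ℂ) / c⁻¹ - γ * c⁻¹ - s = ((x : ℂ) - α) * c := by
      field_simp [hγdef]
      ring
    rw [h, mul_inv, mul_comm]
  rw [show (∫ x, ((x : ℂ) / c⁻¹ - γ * c⁻¹ - s)⁻¹ ∂FA)
      = ∫ x, c⁻¹ * ((x : ℂ) - α)⁻¹ ∂FA from by simp only [hint2],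
    MeasureTheory.integral_const_mul] at hDSγ
  rw [hM, hDSγ, ← mul_assoc, mul_inv_cancel₀ hc0, one_mul]

/-- Uniqueness of the solution to the inverted Dozier–Silverstein
equation in the admissible domain `D`. -/
theorem uniqueness_inverted_DS
    (F FA : Measure ℝ) [IsProbabilityMeasure F] [IsProbabilityMeasure FA]
    (a b : ℝ) (ha : 0 < a) (hab : a ≤ b)
    (hsupp : F ((Set.Icc a b ∪ {0})ᶜ) = 0)
    (y σ : ℝ) (hy : 0 < y) (hσ : 0 ≤ σ)
    (m : ℂ → ℂ) (hm : ∀ γ : ℂ, m γ = ∫ τ, ((τ : ℂ) - γ)⁻¹ ∂F)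
    (hDS : ∀ γ : ℂ, 0 < γ.im →
      m γ = ∫ x, ((x : ℂ) / (1 + (y : ℂ) * (σ : ℂ) ^ 2 * m γ)
        - γ * (1 + (y : ℂ) * (σ : ℂ) ^ 2 * m γ)
        - (σ : ℂ) ^ 2 * ((y : ℂ) - 1))⁻¹ ∂FA)
    (α : ℂ) (hα : 0 < α.im) (m₁ m₂ : ℂ)
    (hD1 : 0 < (α * (1 - (y : ℂ) * (σ : ℂ) ^ 2 * m₁) ^ 2
      - (σ : ℂ) ^ 2 * ((y : ℂ) - 1) * (1 - (y : ℂ) * (σ : ℂ) ^ 2 * m₁)).im)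
    (hD2 : 0 < (α * (1 - (y : ℂ) * (σ : ℂ) ^ 2 * m₂) ^ 2
      - (σ : ℂ) ^ 2 * ((y : ℂ) - 1) * (1 - (y : ℂ) * (σ : ℂ) ^ 2 * m₂)).im)
    (he1 : m₁ = ∫ τ, ((τ : ℂ) / (1 - (y : ℂ) * (σ : ℂ) ^ 2 * m₁)
      - α * (1 - (y : ℂ) * (σ : ℂ) ^ 2 * m₁) + (σ : ℂ) ^ 2 * ((y : ℂ) - 1))⁻¹ ∂F)
    (he2 : m₂ = ∫ τ, ((τ : ℂ) / (1 - (y : ℂ) * (σ : ℂ) ^ 2 * m₂)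
      - α * (1 - (y : ℂ) * (σ : ℂ) ^ 2 * m₂) + (σ : ℂ) ^ 2 * ((y : ℂ) - 1))⁻¹ ∂F) :
    m₁ = m₂ := by
  rw [key_inverted_DS F FA y σ m hm hDS α m₁ hD1 he1,
    key_inverted_DS F FA y σ m hm hDS α m₂ hD2 he2]
end

section
/- Let γ* : [0,1] → ℝ be piecewise continuous with finitely many jumps and bounded, and let γ^{(n)} : [0,1] → ℝ converge uniformly to γ*. With k = ⌊θ√n⌋, m = ⌊n/(2k)⌋, and w_i = Σ_{|j|<k}(1-|j|/k)² ∫_{((2i-1)k+j-1)/n}^{((2i-1)k+j)/n} (γ^{(n)}_t)² dt, one has lim_{n→∞} Σ_{i=1}^m ∫_{(2i-2)k/n}^{2ik/n} | m·w_i - (γ*_s)²/3 | ds = 0. -/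
open Filter

/-- The triangular-kernel weighted block integral
`w_i = Σ_{|j|<k} (1 - |j|/k)² ∫_{((2i-1)k+j-1)/n}^{((2i-1)k+j)/n} γ_t² dt`. -/
noncomputable def blockWeight (γ : ℝ → ℝ) (n k i : ℕ) : ℝ :=
  ∑ j ∈ Finset.Icc (-(k : ℤ) + 1) ((k : ℤ) - 1),
    (1 - ((|j| : ℤ) : ℝ) / (k : ℝ)) ^ 2 *
      ∫ t in ((((2 * (i : ℤ) - 1) * (k : ℤ) + j - 1 : ℤ) : ℝ) / (n : ℝ))..
          ((((2 * (i : ℤ) - 1) * (k : ℤ) + j : ℤ) : ℝ) / (n : ℝ)), (γ t) ^ 2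

/-!
Write `f = (γ⁽ⁿ⁾)²` and `g = (γ*)²`. On the `i`-th block `[(2i-2)k/n, 2ik/n]` the quantity
`m w_i` is a weighted sum, with weights in `[0, 1]`, of the integrals of `f` over the `2k` cells of
length `1/n`; the weights have total mass `(2k²+1)/(3k)`, so `m w_i` of a constant `v` is `ρ v`
with `ρ = m (2k²+1)/(3kn) → 1/3`. Since `2km ≤ n`, the map `f ↦ (m w_i)_i` is a contraction
for the `L¹` norm on `[0,1]`. Hence, for a continuous compactly supported `h` with
`‖g - h‖₁ ≤ ε`, the total error is at most `sup |f - g| + 2ε + ω_h(2k/n) + |ρ - 1/3| sup g`,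
where `ω_h` is the modulus of continuity of `h`, and every term but `2ε` tends to `0`.
-/

open MeasureTheory Topology

noncomputable def gridSum (c : ℕ → ℝ) (N : ℕ) (a δ : ℝ) (f : ℝ → ℝ) : ℝ :=
  ∑ l ∈ Finset.range N, c l * ∫ t in a + l * δ..a + (l + 1) * δ, f t

section gridSum

variable {c : ℕ → ℝ} {N : ℕ} {a δ : ℝ}

lemma uIcc_grid_subset (hδ : 0 ≤ δ) {l : ℕ} (hl : l < N) :
    Set.uIcc (a + l * δ) (a + (l + 1) * δ) ⊆ Set.Icc a (a + N * δ) := by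
  have hlN : (l : ℝ) + 1 ≤ N := by exact_mod_cast hl
  rw [Set.uIcc_of_le (by nlinarith)]
  exact Set.Icc_subset_Icc (le_add_of_nonneg_right (by positivity)) (by nlinarith)

lemma gridSum_sub {f g : ℝ → ℝ} (hδ : 0 ≤ δ) (hf : IntegrableOn f (Set.Icc a (a + N * δ)))
    (hg : IntegrableOn g (Set.Icc a (a + N * δ))) :
    gridSum c N a δ (f - g) = gridSum c N a δ f - gridSum c N a δ g := by
  simp only [gridSum, ← Finset.sum_sub_distrib, ← mul_sub]
  refine Finset.sum_congr rfl fun l hl => ?_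
  have hJ := uIcc_grid_subset (a := a) hδ (Finset.mem_range.1 hl)
  rw [← intervalIntegral.integral_sub ((hf.mono_set hJ).intervalIntegrable)
    ((hg.mono_set hJ).intervalIntegrable)]
  rfl

lemma gridSum_const (v : ℝ) :
    gridSum c N a δ (fun _ => v) = (∑ l ∈ Finset.range N, c l) * δ * v := by
  simp only [gridSum, intervalIntegral.integral_const, smul_eq_mul, Finset.sum_mul]
  refine Finset.sum_congr rfl fun l _ => ?_
  ring

lemma abs_gridSum_le_of_abs_le {u : ℝ → ℝ} {η : ℝ} (hc : ∀ l, 0 ≤ c l) (hδ : 0 ≤ δ)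
    (hu : ∀ t ∈ Set.Icc a (a + N * δ), |u t| ≤ η) :
    |gridSum c N a δ u| ≤ (∑ l ∈ Finset.range N, c l) * δ * η := by
  refine (Finset.abs_sum_le_sum_abs _ _).trans ?_
  rw [Finset.sum_mul, Finset.sum_mul]
  refine Finset.sum_le_sum fun l hl => ?_
  have hJ := uIcc_grid_subset (a := a) hδ (Finset.mem_range.1 hl)
  have hint := intervalIntegral.norm_integral_le_of_norm_le_const (a := a + l * δ)
    (b := a + (l + 1) * δ) (C := η) (f := u)
    fun t ht => hu t (hJ (Set.uIoc_subset_uIcc ht))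
  rw [Real.norm_eq_abs, show a + (l + 1) * δ - (a + l * δ) = δ by ring, abs_of_nonneg hδ] at hint
  rw [abs_mul, abs_of_nonneg (hc l), mul_assoc, mul_comm δ]
  exact mul_le_mul_of_nonneg_left hint (hc l)

lemma abs_gridSum_le_integral_abs {u : ℝ → ℝ} (hc : ∀ l < N, 0 ≤ c l ∧ c l ≤ 1) (hδ : 0 ≤ δ)
    (hu : IntegrableOn u (Set.Icc a (a + N * δ))) :
    |gridSum c N a δ u| ≤ ∫ t in a..a + N * δ, |u t| := by
  have hJ : ∀ l < N, IntervalIntegrable (fun t => |u t|) volume (a + l * δ) (a + (l + 1) * δ) :=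
    fun l hl => ((hu.mono_set (uIcc_grid_subset hδ hl)).intervalIntegrable).abs
  calc |gridSum c N a δ u|
      ≤ ∑ l ∈ Finset.range N, ∫ t in a + l * δ..a + (l + 1) * δ, |u t| := by
        refine (Finset.abs_sum_le_sum_abs _ _).trans (Finset.sum_le_sum fun l hl => ?_)
        obtain ⟨hc0, hc1⟩ := hc l (Finset.mem_range.1 hl)
        rw [abs_mul, abs_of_nonneg hc0]
        refine (mul_le_of_le_one_left (abs_nonneg _) hc1).trans ?_
        exact intervalIntegral.abs_integral_le_integral_abs (by nlinarith)
    _ = ∫ t in a..a + N * δ, |u t| := by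
        have := intervalIntegral.sum_integral_adjacent_intervals (a := fun l : ℕ => a + l * δ)
          (f := fun t => |u t|) (μ := volume) (n := N) (by simpa using hJ)
        simpa using this

end gridSum

/-- The weight `(1 - |j|/k)²` of `blockWeight`, re-indexed by `l = j + k - 1`. -/
noncomputable def kernelCoeff (k l : ℕ) : ℝ := (1 - |(l : ℝ) - (k - 1)| / k) ^ 2

noncomputable def kernelMass (k : ℕ) : ℝ := ∑ l ∈ Finset.range (2 * k), kernelCoeff k l

lemma kernelCoeff_nonneg (k l : ℕ) : 0 ≤ kernelCoeff k l := sq_nonneg _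

lemma kernelCoeff_le_one {k l : ℕ} (hl : l < 2 * k) : kernelCoeff k l ≤ 1 := by
  have hl' : (l : ℝ) + 1 ≤ 2 * k := by exact_mod_cast hl
  have hdist : |(l : ℝ) - (k - 1)| ≤ k :=
    abs_le.2 ⟨by linarith [l.cast_nonneg (α := ℝ)], by linarith⟩
  have hq0 : 0 ≤ |(l : ℝ) - (k - 1)| / k := by positivity
  have hq1 : |(l : ℝ) - (k - 1)| / k ≤ 1 := div_le_one_of_le₀ hdist k.cast_nonneg
  exact pow_le_one₀ (by linarith) (by linarith)

lemma kernelMass_le (k : ℕ) : kernelMass k ≤ 2 * k := by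
  calc kernelMass k ≤ ∑ _l ∈ Finset.range (2 * k), (1 : ℝ) :=
        Finset.sum_le_sum fun l hl => kernelCoeff_le_one (Finset.mem_range.1 hl)
    _ = 2 * k := by simp

lemma sum_range_add_one_sq (K : ℕ) :
    ∑ l ∈ Finset.range K, ((l : ℝ) + 1) ^ 2 = (K : ℝ) * (K + 1) * (2 * K + 1) / 6 := by
  induction K with
  | zero => simp
  | succ K ih => rw [Finset.sum_range_succ, ih]; push_cast; ring

lemma sum_range_sub_sq (K : ℕ) :
    ∑ l ∈ Finset.range K, ((K : ℝ) - 1 - l) ^ 2 = ((K : ℝ) - 1) * K * (2 * K - 1) / 6 := by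
  induction K with
  | zero => simp
  | succ K ih =>
    have shift : ∀ l : ℕ, ((K + 1 : ℕ) : ℝ) - 1 - ((l + 1 : ℕ) : ℝ) = K - 1 - l := by
      intro l; push_cast; ring
    rw [Finset.sum_range_succ']
    simp only [shift, ih]
    push_cast
    ring

lemma kernelMass_eq (k : ℕ) : kernelMass k = (2 * k ^ 2 + 1) / (3 * k) := by
  rcases Nat.eq_zero_or_pos k with rfl | hk
  · simp [kernelMass]
  have hK : (k : ℝ) ≠ 0 := by positivity
  have left : ∀ l ∈ Finset.range k, kernelCoeff k l = ((l : ℝ) + 1) ^ 2 / k ^ 2 := by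
    intro l hl
    have : (l : ℝ) + 1 ≤ k := by exact_mod_cast Finset.mem_range.1 hl
    rw [kernelCoeff, abs_of_nonpos (by linarith)]
    field_simp
    ring
  have right : ∀ l ∈ Finset.range k, kernelCoeff k (k + l) = ((k : ℝ) - 1 - l) ^ 2 / k ^ 2 := by
    intro l _
    rw [kernelCoeff, Nat.cast_add, abs_of_nonneg (by linarith [l.cast_nonneg (α := ℝ)])]
    field_simp
    ring
  unfold kernelMass
  rw [two_mul, Finset.sum_range_add, Finset.sum_congr rfl left,
    Finset.sum_congr rfl right, ← Finset.sum_div, ← Finset.sum_div, sum_range_add_one_sq,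
    sum_range_sub_sq]
  field_simp
  ring

lemma kernelCoeff_two_mul_sub_one {k : ℕ} (hk : 1 ≤ k) : kernelCoeff k (2 * k - 1) = 0 := by
  have hK : (k : ℝ) ≠ 0 := by positivity
  have hcast : ((2 * k - 1 : ℕ) : ℝ) - (k - 1) = k := by
    rw [Nat.cast_sub (by omega)]; push_cast; ring
  rw [kernelCoeff, hcast, abs_of_nonneg k.cast_nonneg, div_self hK]
  ring

/-- The extra cell `l = 2k - 1` has weight zero, so the grid covers the whole block
`[(2i-2)k/n, 2ik/n]`. -/
lemma blockWeight_eq_gridSum (γ : ℝ → ℝ) (n k i : ℕ) :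
    blockWeight γ n k i =
      gridSum (kernelCoeff k) (2 * k) ((2 * i - 2) * k / n) (1 / n) (fun t => γ t ^ 2) := by
  rcases Nat.eq_zero_or_pos k with rfl | hk
  · simp [blockWeight, gridSum]
  rw [gridSum, show 2 * k = 2 * k - 1 + 1 by omega, Finset.sum_range_succ,
    kernelCoeff_two_mul_sub_one hk, zero_mul, add_zero, blockWeight]
  refine Finset.sum_nbij' (fun j => (j + (k - 1)).toNat) (fun l => (l : ℤ) - (k - 1))
    ?_ ?_ ?_ ?_ fun j hj => ?_
  iterate 4 (intro x hx; simp only [Finset.mem_Icc, Finset.mem_range] at hx ⊢; omega)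
  simp only [Finset.mem_Icc] at hj
  have hl : (((j + (k - 1)).toNat : ℕ) : ℝ) = j + k - 1 := by
    rw [← Int.cast_natCast, Int.toNat_of_nonneg (by omega)]
    push_cast; ring
  rw [kernelCoeff, hl, Int.cast_abs, show (j : ℝ) + k - 1 - (k - 1) = j by ring]
  congr 2 <;> push_cast <;> ring

section block

variable {f g h : ℝ → ℝ} {k : ℕ} {a δ μ ε C : ℝ}

lemma gridSum_kernel_decomp (hδ : 0 ≤ δ) (hf : IntegrableOn f (Set.Icc a (a + 2 * k * δ)))
    (hg : IntegrableOn g (Set.Icc a (a + 2 * k * δ))) (hh : Continuous h) (s : ℝ) :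
    gridSum (kernelCoeff k) (2 * k) a δ f
      = gridSum (kernelCoeff k) (2 * k) a δ (f - g) + gridSum (kernelCoeff k) (2 * k) a δ (g - h)
        + gridSum (kernelCoeff k) (2 * k) a δ (fun t => h t - h s) + kernelMass k * δ * h s := by
  have hN : a + 2 * k * δ = a + ((2 * k : ℕ) : ℝ) * δ := by push_cast; ring
  rw [hN] at hf hg
  have hhB : IntegrableOn h (Set.Icc a (a + ((2 * k : ℕ) : ℝ) * δ)) :=
    hh.continuousOn.integrableOn_Icc
  rw [gridSum_sub hδ hf hg, gridSum_sub hδ hg hhB,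
    show (fun t => h t - h s) = h - fun _ => h s from rfl,
    gridSum_sub hδ hhB continuousOn_const.integrableOn_Icc, gridSum_const, kernelMass]
  ring

lemma abs_mul_gridSum_sub_le (hδ : 0 ≤ δ) (hμ : 0 ≤ μ) (hμk : μ * (2 * k * δ) ≤ 1)
    (hf : IntegrableOn f (Set.Icc a (a + 2 * k * δ)))
    (hg : IntegrableOn g (Set.Icc a (a + 2 * k * δ))) (hh : Continuous h)
    {s : ℝ} (hs : s ∈ Set.Icc a (a + 2 * k * δ))
    (hhs : ∀ t ∈ Set.Icc a (a + 2 * k * δ), |h t - h s| ≤ ε) (hgs : |g s| ≤ C) :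
    |μ * gridSum (kernelCoeff k) (2 * k) a δ f - g s / 3|
      ≤ μ * |gridSum (kernelCoeff k) (2 * k) a δ (f - g)|
        + μ * |gridSum (kernelCoeff k) (2 * k) a δ (g - h)|
        + ε + |μ * kernelMass k * δ - 1 / 3| * C + |g s - h s| := by
  have hosc : |gridSum (kernelCoeff k) (2 * k) a δ (fun t => h t - h s)|
      ≤ kernelMass k * δ * ε :=
    abs_gridSum_le_of_abs_le (kernelCoeff_nonneg k) hδ (by push_cast; exact hhs)
  rw [gridSum_kernel_decomp hδ hf hg hh s]
  generalize gridSum (kernelCoeff k) (2 * k) a δ (f - g) = A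
  generalize gridSum (kernelCoeff k) (2 * k) a δ (g - h) = B
  generalize gridSum (kernelCoeff k) (2 * k) a δ (fun t => h t - h s) = D at hosc
  have hε : 0 ≤ ε := (abs_nonneg _).trans (hhs s hs)
  have hρ1 : μ * kernelMass k * δ ≤ 1 :=
    (mul_le_mul_of_nonneg_right (mul_le_mul_of_nonneg_left (kernelMass_le k) hμ) hδ).trans
      (by linarith)
  have hρ0 : 0 ≤ μ * kernelMass k * δ :=
    mul_nonneg (mul_nonneg hμ (Finset.sum_nonneg fun l _ => kernelCoeff_nonneg k l)) hδ
  have hD : |μ * D| ≤ ε :=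
    calc |μ * D| ≤ μ * (kernelMass k * δ * ε) := by rw [abs_mul, abs_of_nonneg hμ]; gcongr
      _ = μ * kernelMass k * δ * ε := by ring
      _ ≤ ε := mul_le_of_le_one_left hε hρ1
  rw [show μ * (A + B + D + kernelMass k * δ * h s) - g s / 3
      = μ * A + μ * B + μ * D + μ * kernelMass k * δ * (h s - g s)
        + (μ * kernelMass k * δ - 1 / 3) * g s by ring]
  generalize μ * kernelMass k * δ = ρ at hρ0 hρ1 ⊢
  have hA : |μ * A| = μ * |A| := by rw [abs_mul, abs_of_nonneg hμ]
  have hB : |μ * B| = μ * |B| := by rw [abs_mul, abs_of_nonneg hμ]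
  have hgh : |ρ * (h s - g s)| ≤ |g s - h s| := by
    rw [abs_mul, abs_of_nonneg hρ0, abs_sub_comm]
    exact mul_le_of_le_one_left (abs_nonneg _) hρ1
  have hgC : |(ρ - 1 / 3) * g s| ≤ |ρ - 1 / 3| * C := by rw [abs_mul]; gcongr
  have := abs_add_le (μ * A + μ * B + μ * D + ρ * (h s - g s)) ((ρ - 1 / 3) * g s)
  have := abs_add_le (μ * A + μ * B + μ * D) (ρ * (h s - g s))
  have := abs_add_le (μ * A + μ * B) (μ * D)
  have := abs_add_le (μ * A) (μ * B)
  linarith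

lemma integral_abs_mul_gridSum_sub_le (hδ : 0 ≤ δ) (hμ : 0 ≤ μ) (hμk : μ * (2 * k * δ) ≤ 1)
    (hf : IntegrableOn f (Set.Icc a (a + 2 * k * δ)))
    (hg : IntegrableOn g (Set.Icc a (a + 2 * k * δ))) (hh : Continuous h)
    (hhε : ∀ s ∈ Set.Icc a (a + 2 * k * δ), ∀ t ∈ Set.Icc a (a + 2 * k * δ), |h t - h s| ≤ ε)
    (hgC : ∀ t ∈ Set.Icc a (a + 2 * k * δ), |g t| ≤ C) :
    ∫ s in a..a + 2 * k * δ, |μ * gridSum (kernelCoeff k) (2 * k) a δ f - g s / 3|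
      ≤ (∫ t in a..a + 2 * k * δ, |f t - g t|) + 2 * (∫ t in a..a + 2 * k * δ, |g t - h t|)
        + 2 * k * δ * (ε + |μ * kernelMass k * δ - 1 / 3| * C) := by
  have hab : a ≤ a + 2 * k * δ := le_add_of_nonneg_right (by positivity)
  have hII : ∀ {u : ℝ → ℝ}, IntegrableOn u (Set.Icc a (a + 2 * k * δ)) →
      IntervalIntegrable u volume a (a + 2 * k * δ) :=
    fun hu => (intervalIntegrable_iff_integrableOn_Icc_of_le hab).2 hu
  have hgh : IntegrableOn (g - h) (Set.Icc a (a + 2 * k * δ)) :=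
    hg.sub hh.continuousOn.integrableOn_Icc
  have hW : ∀ {u : ℝ → ℝ}, IntegrableOn u (Set.Icc a (a + 2 * k * δ)) →
      μ * (2 * k * δ) * |gridSum (kernelCoeff k) (2 * k) a δ u|
        ≤ ∫ t in a..a + 2 * k * δ, |u t| := by
    intro u hu
    have hN : a + ((2 * k : ℕ) : ℝ) * δ = a + 2 * k * δ := by push_cast; ring
    refine (mul_le_of_le_one_left (abs_nonneg _) hμk).trans ?_
    have := abs_gridSum_le_integral_abs (c := kernelCoeff k) (N := 2 * k) (a := a)
      (fun l hl => ⟨kernelCoeff_nonneg k l, kernelCoeff_le_one hl⟩) hδ (hN ▸ hu)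
    rwa [hN] at this
  set K := μ * |gridSum (kernelCoeff k) (2 * k) a δ (f - g)|
    + μ * |gridSum (kernelCoeff k) (2 * k) a δ (g - h)| + ε + |μ * kernelMass k * δ - 1 / 3| * C
  calc ∫ s in a..a + 2 * k * δ, |μ * gridSum (kernelCoeff k) (2 * k) a δ f - g s / 3|
      ≤ ∫ s in a..a + 2 * k * δ, (K + |g s - h s|) :=
        intervalIntegral.integral_mono_on hab
          ((intervalIntegrable_const.sub ((hII hg).div_const 3)).abs)
          (intervalIntegrable_const.add (hII hgh).abs)
          fun s hs => abs_mul_gridSum_sub_le hδ hμ hμk hf hg hh hs (hhε s hs) (hgC s hs)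
    _ = 2 * k * δ * K + ∫ t in a..a + 2 * k * δ, |g t - h t| := by
        rw [intervalIntegral.integral_add (f := fun _ => K) (g := fun s => |g s - h s|)
          intervalIntegrable_const (hII hgh).abs,
          intervalIntegral.integral_const, smul_eq_mul, add_sub_cancel_left]
    _ ≤ _ := by
        have hfg := hW (hf.sub hg)
        have hgh' := hW hgh
        simp only [Pi.sub_apply] at hfg hgh'
        simp only [K]
        nlinarith

end block

section blocks

variable {n k m i : ℕ}

lemma block_subset_Icc (hkm : 2 * k * m ≤ n) (hi : i ∈ Finset.Icc 1 m) :
    Set.Icc ((2 * i - 2) * k / n : ℝ) (2 * i * k / n) ⊆ Set.Icc 0 1 := by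
  obtain ⟨hi1, him⟩ := Finset.mem_Icc.1 hi
  have hi1' : (1 : ℝ) ≤ i := by exact_mod_cast hi1
  have hik : (2 * i * k : ℝ) ≤ n := by
    have : 2 * i * k ≤ n := by nlinarith
    exact_mod_cast this
  exact Set.Icc_subset_Icc (div_nonneg (mul_nonneg (by linarith) k.cast_nonneg) n.cast_nonneg)
    (div_le_one_of_le₀ hik n.cast_nonneg)

lemma sum_integral_block_le_setIntegral {u : ℝ → ℝ} (hu : IntegrableOn u (Set.Icc 0 1))
    (hu0 : ∀ t ∈ Set.Icc (0 : ℝ) 1, 0 ≤ u t) (hkm : 2 * k * m ≤ n) :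
    ∑ i ∈ Finset.Icc 1 m, ∫ t in (2 * i - 2) * k / n..2 * i * k / n, u t
      ≤ ∫ t in Set.Icc 0 1, u t := by
  set b : ℕ → ℝ := fun i => (2 * i - 2) * k / n
  have hb : ∀ i : ℕ, b (i + 1) = 2 * i * k / n := fun i => by simp only [b]; push_cast; ring
  have hsum : ∑ i ∈ Finset.Icc 1 m, ∫ t in (2 * i - 2) * k / n..2 * i * k / n, u t
      = ∫ t in b 1..b (m + 1), u t := by
    rw [← Finset.Ico_add_one_right_eq_Icc,
      ← intervalIntegral.sum_integral_adjacent_intervals_Ico (by omega)]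
    · simp only [hb, b]
    · intro i hi
      rw [hb]
      refine (hu.mono_set ?_).intervalIntegrable
      rw [Set.uIcc_of_le (div_le_div_of_nonneg_right (by linarith) n.cast_nonneg)]
      obtain ⟨hi1, hi2⟩ := Set.mem_Ico.1 hi
      exact block_subset_Icc hkm (Finset.mem_Icc.2 ⟨hi1, by omega⟩)
  have hend : b (m + 1) ≤ 1 := by
    rw [hb]
    exact div_le_one_of_le₀ (by rw [mul_right_comm]; exact_mod_cast hkm) n.cast_nonneg
  rw [hsum, show b 1 = 0 by simp [b], intervalIntegral.integral_of_le (by rw [hb]; positivity)]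
  exact setIntegral_mono_set hu (ae_restrict_of_forall_mem measurableSet_Icc hu0)
    (Set.Ioc_subset_Icc_self.trans (Set.Icc_subset_Icc_right hend)).eventuallyLE

lemma sum_integral_abs_mul_gridSum_sub_le {f g h : ℝ → ℝ} {C ε : ℝ}
    (hf : IntegrableOn f (Set.Icc 0 1)) (hg : IntegrableOn g (Set.Icc 0 1)) (hh : Continuous h)
    (hhε : ∀ s t : ℝ, |t - s| ≤ 2 * k / n → |h t - h s| ≤ ε)
    (hgC : ∀ t ∈ Set.Icc (0 : ℝ) 1, |g t| ≤ C) :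
    ∑ i ∈ Finset.Icc 1 (n / (2 * k)), ∫ s in ((2 * i - 2) * k / n : ℝ)..2 * i * k / n,
        |((n / (2 * k) : ℕ) : ℝ) *
          gridSum (kernelCoeff k) (2 * k) ((2 * i - 2) * k / n) (1 / n) f - g s / 3|
      ≤ (∫ t in Set.Icc 0 1, |f t - g t|) + 2 * (∫ t in Set.Icc 0 1, |g t - h t|)
        + (ε + |((n / (2 * k) : ℕ) : ℝ) * kernelMass k * (1 / n) - 1 / 3| * C) := by
  set m := n / (2 * k)
  have hkm : 2 * k * m ≤ n := Nat.mul_div_le n (2 * k)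
  have hkmR : 2 * k * (m : ℝ) ≤ n := by exact_mod_cast hkm
  have hend : ∀ i : ℕ, (2 * i - 2) * k / n + 2 * k * (1 / n : ℝ) = 2 * i * k / n :=
    fun i => by ring
  have hE : 0 ≤ ε + |(m : ℝ) * kernelMass k * (1 / n) - 1 / 3| * C := by
    have hε : 0 ≤ ε :=
      (abs_nonneg _).trans (hhε 0 0 (by simp only [sub_self, abs_zero]; positivity))
    have hC : 0 ≤ C := (abs_nonneg _).trans (hgC 0 ⟨le_rfl, zero_le_one⟩)
    positivity
  have hblock : ∀ i ∈ Finset.Icc 1 m, ∫ s in ((2 * i - 2) * k / n : ℝ)..2 * i * k / n,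
        |(m : ℝ) * gridSum (kernelCoeff k) (2 * k) ((2 * i - 2) * k / n) (1 / n) f - g s / 3|
      ≤ (∫ t in ((2 * i - 2) * k / n : ℝ)..2 * i * k / n, |f t - g t|)
        + 2 * (∫ t in ((2 * i - 2) * k / n : ℝ)..2 * i * k / n, |g t - h t|)
        + 2 * k / n * (ε + |(m : ℝ) * kernelMass k * (1 / n) - 1 / 3| * C) := by
    intro i hi
    have hB := block_subset_Icc hkm hi
    rw [← hend] at hB ⊢
    convert integral_abs_mul_gridSum_sub_le (by positivity) m.cast_nonneg
      (by rw [← mul_assoc, mul_one_div]; exact div_le_one_of_le₀ (by linarith) n.cast_nonneg)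
      (hf.mono_set hB) (hg.mono_set hB) hh (fun s hs t ht => hhε s t ?_)
      (fun t ht => hgC t (hB ht)) using 2
    · ring
    · rw [abs_le]; constructor <;> linarith [hs.1, hs.2, ht.1, ht.2, mul_one_div (2 * k : ℝ) n]
  have hsum := Finset.sum_le_sum hblock
  rw [Finset.sum_add_distrib, Finset.sum_add_distrib, ← Finset.mul_sum, Finset.sum_const,
    Nat.card_Icc, Nat.add_sub_cancel, nsmul_eq_mul] at hsum
  have hfg := sum_integral_block_le_setIntegral (hf.sub hg).abs
    (fun t _ => abs_nonneg (f t - g t)) hkm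
  have hgh := sum_integral_block_le_setIntegral (hg.sub hh.continuousOn.integrableOn_Icc).abs
    (fun t _ => abs_nonneg (g t - h t)) hkm
  have hmk : (m : ℝ) * (2 * k / n) ≤ 1 := by
    rw [← mul_div_assoc]; exact div_le_one_of_le₀ (by linarith) n.cast_nonneg
  simp only [Pi.sub_apply] at hfg hgh
  nlinarith

end blocks

lemma IntegrableOn.exists_hasCompactSupport_setIntegral_sub_le {α E : Type*}
    [TopologicalSpace α] [NormalSpace α] [R1Space α] [WeaklyLocallyCompactSpace α]
    [MeasurableSpace α] [BorelSpace α] [NormedAddCommGroup E] [NormedSpace ℝ E]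
    {μ : Measure α} [μ.Regular] {f : α → E} {s : Set α} (hs : MeasurableSet s)
    (hf : IntegrableOn f s μ) {ε : ℝ} (hε : 0 < ε) :
    ∃ g : α → E, HasCompactSupport g ∧ Continuous g ∧ ∫ x in s, ‖f x - g x‖ ∂μ ≤ ε := by
  obtain ⟨g, hgc, hfg, hg, hgi⟩ :=
    (hf.integrable_indicator hs).exists_hasCompactSupport_integral_sub_le hε
  refine ⟨g, hgc, hg, ?_⟩
  calc ∫ x in s, ‖f x - g x‖ ∂μ = ∫ x in s, ‖s.indicator f x - g x‖ ∂μ :=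
        setIntegral_congr_fun hs fun x hx => by rw [Set.indicator_of_mem hx]
    _ ≤ ∫ x, ‖s.indicator f x - g x‖ ∂μ :=
        setIntegral_le_integral ((hf.integrable_indicator hs).sub hgi).norm
          (Eventually.of_forall fun _ => norm_nonneg _)
    _ ≤ ε := hfg

lemma integrableOn_sq_of_abs_le {μ : Measure ℝ} {γ : ℝ → ℝ} {s : Set ℝ} {C : ℝ}
    (hγ : Measurable γ) (hs : MeasurableSet s) (hμs : μ s ≠ ⊤) (hC : ∀ t ∈ s, |γ t| ≤ C) :
    IntegrableOn (fun t => γ t ^ 2) s μ :=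
  Measure.integrableOn_of_bounded (M := C ^ 2) hμs (hγ.pow_const 2).aestronglyMeasurable
    (ae_restrict_of_forall_mem hs fun t ht => by
      rw [Real.norm_eq_abs, abs_pow]; exact pow_le_pow_left₀ (abs_nonneg _) (hC t ht) 2)

lemma TendstoUniformlyOn.eventually_abs_sq_sub_sq_le {ι : Type*} {l : Filter ι}
    {F : ι → ℝ → ℝ} {f : ℝ → ℝ} {s : Set ℝ} {C : ℝ} (hu : TendstoUniformlyOn F f l s)
    (hF : ∀ i, ∀ t ∈ s, |F i t| ≤ C) (hf : ∀ t ∈ s, |f t| ≤ C) {ε : ℝ} (hε : 0 < ε) :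
    ∀ᶠ i in l, ∀ t ∈ s, |F i t ^ 2 - f t ^ 2| ≤ ε := by
  filter_upwards [Metric.tendstoUniformlyOn_iff.1 hu (ε / (2 * |C| + 1)) (by positivity)]
    with i hi t ht
  have hdiff : |F i t - f t| ≤ ε / (2 * |C| + 1) := by
    rw [abs_sub_comm, ← Real.dist_eq]; exact (hi t ht).le
  have hsum : |F i t + f t| ≤ 2 * |C| + 1 := by
    have := abs_add_le (F i t) (f t)
    linarith [hF i t ht, hf t ht, le_abs_self C]
  calc |F i t ^ 2 - f t ^ 2| = |F i t - f t| * |F i t + f t| := by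
        rw [← abs_mul]; ring_nf
    _ ≤ ε / (2 * |C| + 1) * (2 * |C| + 1) := by gcongr
    _ = ε := div_mul_cancel₀ _ (by positivity)

lemma tendsto_floor_mul_sqrt_atTop {θ : ℝ} (hθ : 0 < θ) :
    Tendsto (fun n : ℕ => ⌊θ * Real.sqrt n⌋₊) atTop atTop :=
  tendsto_nat_floor_atTop.comp
    ((Real.tendsto_sqrt_atTop.comp tendsto_natCast_atTop_atTop).const_mul_atTop hθ)

lemma tendsto_floor_mul_sqrt_div {θ : ℝ} (hθ : 0 ≤ θ) :
    Tendsto (fun n : ℕ => (⌊θ * Real.sqrt n⌋₊ : ℝ) / n) atTop (𝓝 0) := by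
  have hlim : Tendsto (fun n : ℕ => θ / Real.sqrt n) atTop (𝓝 0) :=
    tendsto_const_nhds.div_atTop (Real.tendsto_sqrt_atTop.comp tendsto_natCast_atTop_atTop)
  refine squeeze_zero (fun n => by positivity) (fun n => ?_) hlim
  rcases n.eq_zero_or_pos with rfl | hn
  · simp
  have hsn : 0 < Real.sqrt n := Real.sqrt_pos.2 (by exact_mod_cast hn)
  calc (⌊θ * Real.sqrt n⌋₊ : ℝ) / n ≤ θ * Real.sqrt n / n := by
        gcongr; exact Nat.floor_le (by positivity)
    _ = θ / Real.sqrt n := by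
        rw [div_eq_div_iff (by positivity) hsn.ne', mul_assoc, Real.mul_self_sqrt n.cast_nonneg]

lemma tendsto_natDiv_mul_div_self {b : ℕ → ℕ} (hb : ∀ᶠ n in atTop, 0 < b n)
    (hbn : Tendsto (fun n => (b n : ℝ) / n) atTop (𝓝 0)) :
    Tendsto (fun n => ((n / b n : ℕ) : ℝ) * b n / n) atTop (𝓝 1) := by
  refine tendsto_of_tendsto_of_tendsto_of_le_of_le' (by simpa using hbn.const_sub 1)
    tendsto_const_nhds ?_ ?_
  · filter_upwards [hb, eventually_gt_atTop 0] with n hbn hn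
    have hn' : (0 : ℝ) < n := by exact_mod_cast hn
    have : (n : ℝ) < (n / b n : ℕ) * b n + b n := by exact_mod_cast Nat.lt_div_mul_add hbn
    rw [sub_le_iff_le_add, ← add_div, le_div_iff₀ hn']
    linarith
  · filter_upwards [eventually_gt_atTop 0] with n hn
    exact div_le_one_of_le₀ (by exact_mod_cast Nat.div_mul_le_self n (b n)) n.cast_nonneg

lemma tendsto_blockCount_mul_kernelMass {κ : ℕ → ℕ} (hκ : Tendsto κ atTop atTop)
    (hκn : Tendsto (fun n => (κ n : ℝ) / n) atTop (𝓝 0)) :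
    Tendsto (fun n => ((n / (2 * κ n) : ℕ) : ℝ) * kernelMass (κ n) * (1 / n)) atTop
      (𝓝 (1 / 3)) := by
  have hfill := tendsto_natDiv_mul_div_self (b := fun n => 2 * κ n)
    ((hκ.eventually_gt_atTop 0).mono fun n hn => by omega)
    (by simpa [mul_div_assoc] using hκn.const_mul 2)
  have hκsq : Tendsto (fun n => 1 / 3 + 1 / (6 * (κ n : ℝ) ^ 2)) atTop (𝓝 (1 / 3)) := by
    have h := (tendsto_const_nhds (x := (1 / 3 : ℝ))).add
      ((tendsto_const_nhds (x := (1 : ℝ))).div_atTop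
      (((tendsto_pow_atTop two_ne_zero).comp (tendsto_natCast_atTop_atTop.comp hκ)).const_mul_atTop
        (by norm_num : (0 : ℝ) < 6)))
    simpa only [add_zero, Function.comp_def] using h
  have hprod := hfill.mul hκsq
  rw [one_mul] at hprod
  refine hprod.congr' ?_
  filter_upwards [hκ.eventually_gt_atTop 0] with n hn
  have : (κ n : ℝ) ≠ 0 := by positivity
  rw [kernelMass_eq]
  push_cast
  field_simp
  ring

theorem blockWeight_L1_convergence_general
    (γstar : ℝ → ℝ) (γn : ℕ → ℝ → ℝ) (θ C : ℝ) (hθ : 0 < θ)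
    (hmeas_star : Measurable γstar) (hmeas : ∀ n, Measurable (γn n))
    (hbdd_star : ∀ t ∈ Set.Icc (0 : ℝ) 1, |γstar t| ≤ C)
    (hbdd : ∀ n, ∀ t ∈ Set.Icc (0 : ℝ) 1, |γn n t| ≤ C)
    (hunif : TendstoUniformlyOn (fun n t => γn n t) γstar atTop (Set.Icc (0 : ℝ) 1)) :
    Tendsto (fun n : ℕ =>
        ∑ i ∈ Finset.Icc 1 (n / (2 * ⌊θ * Real.sqrt n⌋₊)),
          ∫ s in (((2 * (i : ℝ) - 2) * (⌊θ * Real.sqrt n⌋₊ : ℝ)) / (n : ℝ))..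
              ((2 * (i : ℝ) * (⌊θ * Real.sqrt n⌋₊ : ℝ)) / (n : ℝ)),
            |((n / (2 * ⌊θ * Real.sqrt n⌋₊) : ℕ) : ℝ) *
                blockWeight (γn n) n ⌊θ * Real.sqrt n⌋₊ i - (γstar s) ^ 2 / 3|)
      atTop (nhds 0) := by
  have hg := integrableOn_sq_of_abs_le (μ := volume) hmeas_star measurableSet_Icc
    measure_Icc_lt_top.ne hbdd_star
  have hf n := integrableOn_sq_of_abs_le (μ := volume) (hmeas n) measurableSet_Icc
    measure_Icc_lt_top.ne (hbdd n)
  have hκn := tendsto_floor_mul_sqrt_div hθ.le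
  have hρ := ((tendsto_blockCount_mul_kernelMass (tendsto_floor_mul_sqrt_atTop hθ) hκn).sub_const
    (1 / 3)).abs.mul_const (C ^ 2)
  simp only [blockWeight_eq_gridSum]
  refine tendsto_order.2 ⟨fun b hb => Eventually.of_forall fun n => hb.trans_le ?_, fun ε hε => ?_⟩
  · exact Finset.sum_nonneg fun i _ =>
      intervalIntegral.integral_nonneg (by gcongr; linarith) fun _ _ => abs_nonneg _
  obtain ⟨h, hhc, hh, hgh⟩ := IntegrableOn.exists_hasCompactSupport_setIntegral_sub_le
    measurableSet_Icc hg (by positivity : 0 < ε / 8)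
  obtain ⟨δ, hδ, hhδ⟩ := Metric.uniformContinuous_iff_le.1
    (hhc.uniformContinuous_of_continuous hh) (ε / 8) (by positivity)
  filter_upwards [hunif.eventually_abs_sq_sub_sq_le hbdd hbdd_star (by positivity : 0 < ε / 8),
    hκn.eventually (eventually_le_nhds (by positivity : 0 < δ / 2)),
    hρ.eventually (eventually_le_nhds (by norm_num; positivity : _ < ε / 8))] with n hfg hkn hρn
  have hfgL1 : ∫ t in Set.Icc (0 : ℝ) 1, |γn n t ^ 2 - γstar t ^ 2| ≤ ε / 8 :=
    (setIntegral_mono_on ((hf n).sub hg).abs continuousOn_const.integrableOn_Icc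
      measurableSet_Icc hfg).trans_eq (by simp)
  simp only [Real.norm_eq_abs] at hgh
  refine (sum_integral_abs_mul_gridSum_sub_le (C := C ^ 2) (hf n) hg hh (fun s t _ => hhδ ?_)
    fun t ht => (abs_pow _ 2).trans_le (pow_le_pow_left₀ (abs_nonneg _) (hbdd_star t ht) 2)
    ).trans_lt (by linarith)
  rw [Real.dist_eq]
  linarith [mul_div_assoc (2 : ℝ) (⌊θ * Real.sqrt n⌋₊ : ℝ) (n : ℝ)]

/-- If `γ⁽ⁿ⁾ → γ*` uniformly on `[0,1]`, with `γ*` bounded and piecewise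
continuous with finitely many jumps, then with `k = ⌊θ√n⌋`, `m = ⌊n/(2k)⌋` and `w_i` the
triangular-kernel block weights of `(γ⁽ⁿ⁾)²`,
`Σ_{i=1}^m ∫_{(2i-2)k/n}^{2ik/n} |m w_i - (γ*_s)²/3| ds → 0`. -/
theorem blockWeight_L1_convergence
    (γstar : ℝ → ℝ) (γn : ℕ → ℝ → ℝ) (θ C : ℝ) (hθ : 0 < θ) (hC : 0 ≤ C)
    (hmeas_star : Measurable γstar) (hmeas : ∀ n, Measurable (γn n))
    (hbdd_star : ∀ t ∈ Set.Icc (0 : ℝ) 1, |γstar t| ≤ C)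
    (hbdd : ∀ n, ∀ t ∈ Set.Icc (0 : ℝ) 1, |γn n t| ≤ C)
    (hpiecewise : ∃ J : Finset ℝ, ∀ t ∈ Set.Icc (0 : ℝ) 1, t ∉ J →
      ContinuousWithinAt γstar (Set.Icc (0 : ℝ) 1) t)
    (hunif : TendstoUniformlyOn (fun n t => γn n t) γstar atTop (Set.Icc (0 : ℝ) 1)) :
    Tendsto (fun n : ℕ =>
        ∑ i ∈ Finset.Icc 1 (n / (2 * ⌊θ * Real.sqrt n⌋₊)),
          ∫ s in (((2 * (i : ℝ) - 2) * (⌊θ * Real.sqrt n⌋₊ : ℝ)) / (n : ℝ))..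
              ((2 * (i : ℝ) * (⌊θ * Real.sqrt n⌋₊ : ℝ)) / (n : ℝ)),
            |((n / (2 * ⌊θ * Real.sqrt n⌋₊) : ℕ) : ℝ) *
                blockWeight (γn n) n ⌊θ * Real.sqrt n⌋₊ i - (γstar s) ^ 2 / 3|)
      atTop (nhds 0) :=
  blockWeight_L1_convergence_general γstar γn θ C hθ hmeas_star hmeas hbdd_star hbdd hunif
end
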